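/- Let I ⊆ S = K[x_0, ..., x_n] be a Borel-fixed monomial ideal over an infinite field K. Then for every 0 ≤ k ≤ n, the saturation of I with respect to the ideal m_k = ⟨x_0, ..., x_k⟩ equals the saturation of I with respect to the single variable x_k: (I : m_k^∞) = (I : x_k^∞). -/

import Mathlib

open MvPolynomial

/-- A matrix is upper triangular if entries below the diagonal vanish. -/
def UpperTriangular {K : Type} [Field K] {m : ℕ} (γ : Matrix (Fin m) (Fin m) K) : Prop :=
  ∀ i j : Fin m, j < i → γ i j = 0

/-- The linear action of a matrix `γ` on the polynomial ring, `γ · x_j = Σ_i γ_{ij} x_i`. -/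
noncomputable def borelAct {K : Type} [Field K] {m : ℕ} (γ : Matrix (Fin m) (Fin m) K) :
    MvPolynomial (Fin m) K →+* MvPolynomial (Fin m) K :=
  (aeval (fun j => ∑ i, C (γ i j) * X i)).toRingHom

/-- An ideal is Borel-fixed if it is fixed by every invertible upper-triangular matrix
acting linearly on the variables. -/
def BorelFixed {K : Type} [Field K] {m : ℕ} (I : Ideal (MvPolynomial (Fin m) K)) : Prop :=
  ∀ γ : Matrix (Fin m) (Fin m) K, UpperTriangular γ → IsUnit γ.det →
    Ideal.map (borelAct γ) I = I

/-- A monomial ideal: with every polynomial it contains all of its monomials. -/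
def IsMonomialIdeal {K : Type} [Field K] {m : ℕ} (I : Ideal (MvPolynomial (Fin m) K)) : Prop :=
  ∀ f ∈ I, ∀ u ∈ f.support, (monomial u 1 : MvPolynomial (Fin m) K) ∈ I

/-- The strong stability exchange condition: `m ∈ I`, `x_j ∣ m`, `i < j` imply `x_i m / x_j ∈ I`. -/
def StronglyStable {K : Type} [Field K] {m : ℕ} (I : Ideal (MvPolynomial (Fin m) K)) : Prop :=
  ∀ u : Fin m →₀ ℕ, (monomial u 1 : MvPolynomial (Fin m) K) ∈ I →
    ∀ i j : Fin m, i < j → u j ≠ 0 →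
      (monomial (u + Finsupp.single i 1 - Finsupp.single j 1) 1 : MvPolynomial (Fin m) K) ∈ I

/-- The saturation `(I : J^∞) = ⋃_k (I : J^k)`. -/
noncomputable def idealSat {R : Type} [CommRing R] (I J : Ideal R) : Ideal R :=
  ⨆ k : ℕ, Submodule.colon I ((J ^ k : Ideal R) : Set R)

/-- The irrelevant maximal ideal `⟨x_0, …, x_m⟩`. -/
noncomputable def irrelevant (m : ℕ) (K : Type) [Field K] : Ideal (MvPolynomial (Fin m) K) :=
  Ideal.span (Set.range X)

/-- The Hilbert function of `S/I`: the dimension of the image of the degree-`i`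
homogeneous component in `S/I`. -/
noncomputable def hfn {K : Type} [Field K] {m : ℕ} (I : Ideal (MvPolynomial (Fin m) K))
    (i : ℕ) : ℕ :=
  Module.finrank K
    ((homogeneousSubmodule (Fin m) K i).map (Ideal.Quotient.mkₐ K I).toLinearMap)

/-- The set of (exponents of) minimal monomial generators of a monomial ideal. -/
def minGens {K : Type} [Field K] {m : ℕ} (I : Ideal (MvPolynomial (Fin m) K)) :
    Set (Fin m →₀ ℕ) :=
  {u | (monomial u 1 : MvPolynomial (Fin m) K) ∈ I ∧
    ∀ v : Fin m →₀ ℕ, v ≤ u → v ≠ u → (monomial v 1 : MvPolynomial (Fin m) K) ∉ I}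

/-!
Let `x_k^t f ∈ I`. As `I` is monomial, `x^(u + t e_k) ∈ I` for every monomial `x^u` of `f`.
For `a < k` the transvection `x_k ↦ x_k + x_a` is upper triangular, and the image of `x^w` under
it has `x^(w - w_k e_k + w_k e_a)` in its support; so Borel-fixedness moves all powers of `x_k`
onto `x_a`, and `x_a^(u_k + t) x^u ∈ I`. Thus every generator of `m_k` lies in the radical of
`(I : x^u)`, and as `m_k` is finitely generated some power of it lies in `(I : x^u)`.
-/

section Saturation

variable {R : Type} [CommRing R]

lemma mem_idealSat_iff {I J : Ideal R} {f : R} :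
    f ∈ idealSat I J ↔ ∃ t : ℕ, ∀ p ∈ J ^ t, f * p ∈ I := by
  have hmono : Monotone fun t : ℕ => I.colon ((J ^ t : Ideal R) : Set R) :=
    fun s t hst => Submodule.colon_mono le_rfl (Ideal.pow_le_pow_right hst)
  simp only [idealSat, Submodule.mem_iSup_of_directed _ hmono.directed_le, Submodule.mem_colon,
    smul_eq_mul, SetLike.mem_coe]

lemma idealSat_antitone (I : Ideal R) : Antitone (idealSat I) :=
  fun _ _ hJ => iSup_mono fun t => Submodule.colon_mono le_rfl (Ideal.pow_right_mono hJ t)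

lemma mem_idealSat_of_le_radical {I J : Ideal R} {f : R} (hJ : J.FG)
    (h : J ≤ (I.colon {f}).radical) : f ∈ idealSat I J := by
  obtain ⟨t, ht⟩ := Ideal.exists_pow_le_of_le_radical_of_fg h hJ
  refine mem_idealSat_iff.2 ⟨t, fun p hp => ?_⟩
  simpa [mul_comm] using ht hp

end Saturation

section MonomialMembership

variable {R σ : Type*} [CommSemiring R]

lemma monomial_one_mem_of_le {I : Ideal (MvPolynomial σ R)} {u v : σ →₀ ℕ} (huv : u ≤ v)
    (hu : monomial u (1 : R) ∈ I) : monomial v (1 : R) ∈ I :=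
  Ideal.mem_of_dvd _ (monomial_dvd_monomial.2 ⟨Or.inr huv, one_dvd _⟩) hu

lemma mem_of_forall_monomial_one_mem {I : Ideal (MvPolynomial σ R)} {f : MvPolynomial σ R}
    (h : ∀ u ∈ f.support, monomial u (1 : R) ∈ I) : f ∈ I := by
  rw [f.as_sum]
  refine Ideal.sum_mem _ fun u hu => ?_
  simpa [C_mul_monomial] using Ideal.mul_mem_left I (C (coeff u f)) (h u hu)

end MonomialMembership

section Transvection

variable {K : Type} [Field K] {m : ℕ}

lemma upperTriangular_transvection {i j : Fin m} (hij : i < j) (c : K) :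
    UpperTriangular (Matrix.transvection i j c) := by
  intro a b hba
  have hab : a ≠ b := hba.ne'
  simp only [Matrix.transvection, Matrix.add_apply, Matrix.one_apply_ne hab, Matrix.single_apply,
    zero_add, ite_eq_right_iff, and_imp]
  rintro rfl rfl
  exact absurd hba hij.not_gt

lemma borelAct_X (γ : Matrix (Fin m) (Fin m) K) (l : Fin m) :
    borelAct γ (X l) = ∑ i, C (γ i l) * X i :=
  aeval_X _ _

lemma borelAct_transvection_X (i j l : Fin m) :
    borelAct (Matrix.transvection i j (1 : K)) (X l) = X l + if l = j then X i else 0 := by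
  obtain rfl | hl := eq_or_ne l j
  · simp [borelAct_X, Matrix.transvection, Matrix.one_apply, Matrix.single_apply, add_mul,
      Finset.sum_add_distrib]
  · simp [borelAct_X, Matrix.transvection, Matrix.one_apply, hl, hl.symm]

lemma borelAct_transvection_monomial (i j : Fin m) (w : Fin m →₀ ℕ) :
    borelAct (Matrix.transvection i j (1 : K)) (monomial w 1) =
      (X j + X i) ^ w j * monomial (w.erase j) 1 := by
  have hsplit : (monomial w 1 : MvPolynomial (Fin m) K) = X j ^ w j * monomial (w.erase j) 1 := by
    rw [X_pow_eq_monomial, monomial_mul, one_mul, Finsupp.single_add_erase]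
  rw [hsplit, map_mul, map_pow, borelAct_transvection_X, if_pos rfl]
  congr 1
  refine (hom_congr_vars (f₂ := RingHom.id _) ?_ (fun l hl _ => ?_) rfl).trans
    (RingHom.id_apply _)
  · ext; simp [borelAct]
  · have hlj : l ≠ j := by
      rw [vars_monomial one_ne_zero] at hl
      rintro rfl; simp at hl
    simp [borelAct_transvection_X, hlj]

lemma coeff_single_add_X_pow {i j : Fin m} (hij : i ≠ j) (n : ℕ) :
    coeff (Finsupp.single i n) ((X j + X i : MvPolynomial (Fin m) K) ^ n) = 1 := by
  induction n with
  | zero => simp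
  | succ n ih =>
    rw [pow_succ, mul_add, coeff_add, Finsupp.single_add, coeff_mul_X, ih, coeff_mul_X', if_neg,
      zero_add]
    simp [hij.symm]

lemma BorelFixed.monomial_erase_add_single_mem {I : Ideal (MvPolynomial (Fin m) K)}
    (hbf : BorelFixed I) (hmon : IsMonomialIdeal I) {i j : Fin m} (hij : i ≤ j)
    {w : Fin m →₀ ℕ} (hw : monomial w (1 : K) ∈ I) :
    monomial (w.erase j + Finsupp.single i (w j)) (1 : K) ∈ I := by
  obtain rfl | hij := hij.eq_or_lt
  · rwa [Finsupp.erase_add_single]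
  have himage : borelAct (Matrix.transvection i j (1 : K)) (monomial w 1) ∈ I := by
    rw [← hbf _ (upperTriangular_transvection hij 1)
      (by simp [Matrix.det_transvection_of_ne _ _ hij.ne])]
    exact Ideal.mem_map_of_mem _ hw
  refine hmon _ himage _ ?_
  rw [borelAct_transvection_monomial, mem_support_iff, add_comm, coeff_mul_monomial,
    coeff_single_add_X_pow hij.ne, one_mul]
  exact one_ne_zero

end Transvection

theorem borelFixed_saturation_eq_general {K : Type} [Field K] (n : ℕ)
    (I : Ideal (MvPolynomial (Fin (n + 1)) K))
    (hmon : IsMonomialIdeal I) (hbf : BorelFixed I) (k : Fin (n + 1)) :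
    idealSat I (Ideal.span {f : MvPolynomial (Fin (n + 1)) K | ∃ i ≤ k, f = X i}) =
      idealSat I (Ideal.span {X k}) := by
  refine le_antisymm (idealSat_antitone I (Ideal.span_le.2 ?_)) fun f hf => ?_
  · exact Set.singleton_subset_iff.2 (Ideal.subset_span ⟨k, le_rfl, rfl⟩)
  obtain ⟨t, ht⟩ := mem_idealSat_iff.1 hf
  have hft : f * X k ^ t ∈ I := ht _ (by simp [Ideal.span_singleton_pow])
  refine mem_of_forall_monomial_one_mem fun u hu =>
    mem_idealSat_of_le_radical (IsNoetherian.noetherian _) (Ideal.span_le.2 ?_)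
  rintro _ ⟨a, hak, rfl⟩
  have hw : monomial (u + Finsupp.single k t) (1 : K) ∈ I := by
    refine hmon _ hft _ ?_
    rwa [mem_support_iff, X_pow_eq_monomial, coeff_mul_monomial, mul_one, ← mem_support_iff]
  refine ⟨u k + t, Submodule.mem_colon_singleton.2 ?_⟩
  rw [smul_eq_mul, X_pow_eq_monomial, monomial_mul, one_mul]
  refine monomial_one_mem_of_le (fun b => ?_) (hbf.monomial_erase_add_single_mem hmon hak hw)
  obtain rfl | hb := eq_or_ne b k
  · simp [add_comm]
  · simp [hb, add_comm]

/-- For a Borel-fixed monomial ideal `I` over an infinite field,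
`(I : ⟨x_0, …, x_k⟩^∞) = (I : x_k^∞)` for all `k`. -/
theorem borelFixed_saturation_eq {K : Type} [Field K] [Infinite K] (n : ℕ)
    (I : Ideal (MvPolynomial (Fin (n + 1)) K))
    (hmon : IsMonomialIdeal I) (hbf : BorelFixed I) (k : Fin (n + 1)) :
    idealSat I (Ideal.span {f : MvPolynomial (Fin (n + 1)) K | ∃ i ≤ k, f = X i}) =
      idealSat I (Ideal.span {X k}) :=
  borelFixed_saturation_eq_general n I hmon hbf k
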